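/- Let S be a semigroup and a ∈ S a regular element (a ∈ aSa). The following are equivalent: (1) any two reflexive inverses of a are equal, i.e. a', a'' ∈ V(a) implies a' = a''; (2) any two inverses of a modulo H are H-related, i.e. a', a'' ∈ V(a)[H] implies a' H a''. -/
import Mathlib


variable {S : Type*} [Semigroup S]

/-- Green's preorder `≤_L`: `a ∈ S¹ b`. -/
def leL (a b : S) : Prop := a = b ∨ ∃ x : S, a = x * b
/-- Green's preorder `≤_R`: `a ∈ b S¹`. -/
def leR (a b : S) : Prop := a = b ∨ ∃ x : S, a = b * x
/-- Green's preorder `≤_H`. -/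
def leH (a b : S) : Prop := leL a b ∧ leR a b
/-- Green's relation `L`. -/
def grL (a b : S) : Prop := leL a b ∧ leL b a
/-- Green's relation `R`. -/
def grR (a b : S) : Prop := leR a b ∧ leR b a
/-- Green's relation `H`. -/
def grH (a b : S) : Prop := leH a b ∧ leH b a
/-- `x` is the group inverse of `a`. -/
def IsGrpInv (a x : S) : Prop := a * x = x * a ∧ a * x * a = a ∧ x * a * x = x
/-- `a` is group invertible. -/
def GrpInvertible (a : S) : Prop := ∃ x : S, IsGrpInv a x
/-- `x ∈ V(a)[H]`: inverse of `a` modulo `H`. -/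
def VH (a x : S) : Prop := grH (a * x * a) a ∧ grH (x * a * x) x
/-- `x ∈ A(a)[H]`: associate of `a` modulo `H`. -/
def AH (a x : S) : Prop := grH (a * x * a) a
/-- `x ∈ V(a)`: reflexive inverse of `a`. -/
def refInv (a x : S) : Prop := a * x * a = a ∧ x * a * x = x
/-- The `H`-class of `a`. -/
def Hclass (a : S) : Set S := {b : S | grH b a}

lemma leL_trans' {a b c : S} (h1 : leL a b) (h2 : leL b c) : leL a c := by
  rcases h1 with rfl | ⟨u, rfl⟩
  · exact h2
  · rcases h2 with rfl | ⟨v, rfl⟩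
    · exact Or.inr ⟨u, rfl⟩
    · exact Or.inr ⟨u * v, (mul_assoc u v c).symm⟩

lemma leR_trans' {a b c : S} (h1 : leR a b) (h2 : leR b c) : leR a c := by
  rcases h1 with rfl | ⟨u, rfl⟩
  · exact h2
  · rcases h2 with rfl | ⟨v, rfl⟩
    · exact Or.inr ⟨u, rfl⟩
    · exact Or.inr ⟨v * u, mul_assoc c v u⟩

lemma leH_trans' {a b c : S} (h1 : leH a b) (h2 : leH b c) : leH a c :=
  ⟨leL_trans' h1.1 h2.1, leR_trans' h1.2 h2.2⟩

lemma grH_refl' (a : S) : grH a a :=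
  ⟨⟨Or.inl rfl, Or.inl rfl⟩, ⟨Or.inl rfl, Or.inl rfl⟩⟩

lemma grH_symm' {a b : S} (h : grH a b) : grH b a := ⟨h.2, h.1⟩

lemma grH_trans' {a b c : S} (h1 : grH a b) (h2 : grH b c) : grH a c :=
  ⟨leH_trans' h1.1 h2.1, leH_trans' h2.2 h1.2⟩

/-- Key lemma: if `a'` is the unique reflexive inverse of `a`, then every inverse of `a`
modulo `H` is `H`-related to `a'`. -/
lemma key {a x a' : S} (hinv : refInv a a')
    (huniq : ∀ y : S, refInv a y → y = a') (hx : VH a x) : grH x a' := by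
  obtain ⟨⟨_, hLa, hRa⟩, _, hLx, hRx⟩ := hx
  -- extract witnesses without S¹
  obtain ⟨k, hk⟩ : ∃ k : S, a = a * x * k := by
    rcases hRa with h | ⟨v, hv⟩
    · exact ⟨a, h⟩
    · exact ⟨a * v, hv.trans (by simp [mul_assoc])⟩
  obtain ⟨m, hm⟩ : ∃ m : S, x = m * (a * x) := by
    rcases hLx with h | ⟨s, hs⟩
    · exact ⟨x, h.trans (mul_assoc x a x)⟩
    · exact ⟨s * x, hs.trans (by simp [mul_assoc])⟩
  obtain ⟨k', hk'⟩ : ∃ k' : S, x = x * a * k' := by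
    rcases hRx with h | ⟨t, ht⟩
    · exact ⟨x, h⟩
    · exact ⟨x * t, ht.trans (by simp [mul_assoc])⟩
  obtain ⟨m', hm'⟩ : ∃ m' : S, a = m' * (x * a) := by
    rcases hLa with h | ⟨u, hu⟩
    · exact ⟨a, h.trans (mul_assoc a x a)⟩
    · exact ⟨u * a, hu.trans (by simp [mul_assoc])⟩
  -- side E : produce the idempotent a'*a = x*k
  have hxkma : x * k = m * a := by
    calc x * k = m * (a * x) * k := by rw [← hm]
      _ = m * (a * x * k) := by simp [mul_assoc]
      _ = m * a := by rw [← hk]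
  have hama : a * m * a = a := by
    calc a * m * a = a * (m * a) := mul_assoc a m a
      _ = a * (x * k) := by rw [← hxkma]
      _ = a * x * k := (mul_assoc a x k).symm
      _ = a := hk.symm
  have hxkx : x * k * x = x := by
    calc x * k * x = m * a * x := by rw [hxkma]
      _ = m * (a * x) := mul_assoc m a x
      _ = x := hm.symm
  have hmam : refInv a (m * a * m) := by
    constructor
    · calc a * (m * a * m) * a = a * m * a * (m * a) := by simp [mul_assoc]
        _ = a * (m * a) := by rw [hama]
        _ = a * m * a := (mul_assoc a m a).symm
        _ = a := hama
    · calc m * a * m * a * (m * a * m) = m * (a * m * a) * (m * a * m) := by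
            simp [mul_assoc]
        _ = m * a * (m * a * m) := by rw [hama]
        _ = m * (a * m * a) * m := by simp [mul_assoc]
        _ = m * a * m := by rw [hama]
  have hmama : m * a * m = a' := huniq _ hmam
  have ha'a : a' * a = x * k := by
    calc a' * a = m * a * m * a := by rw [← hmama]
      _ = m * (a * m * a) := by simp [mul_assoc]
      _ = m * a := by rw [hama]
      _ = x * k := hxkma.symm
  -- side F : produce the idempotent a*a' = a*k'
  have ham'x : m' * x = a * k' := by
    calc m' * x = m' * (x * a * k') := by rw [← hk']
      _ = m' * (x * a) * k' := by simp [mul_assoc]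
      _ = a * k' := by rw [← hm']
  have hak'a : a * k' * a = a := by
    calc a * k' * a = m' * x * a := by rw [ham'x]
      _ = m' * (x * a) := mul_assoc m' x a
      _ = a := hm'.symm
  have hkak : refInv a (k' * a * k') := by
    constructor
    · calc a * (k' * a * k') * a = a * k' * a * (k' * a) := by simp [mul_assoc]
        _ = a * (k' * a) := by rw [hak'a]
        _ = a * k' * a := (mul_assoc a k' a).symm
        _ = a := hak'a
    · calc k' * a * k' * a * (k' * a * k') = k' * (a * k' * a) * (k' * a * k') := by
            simp [mul_assoc]
        _ = k' * a * (k' * a * k') := by rw [hak'a]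
        _ = k' * (a * k' * a) * k' := by simp [mul_assoc]
        _ = k' * a * k' := by rw [hak'a]
  have hkaka : k' * a * k' = a' := huniq _ hkak
  have haa' : a * a' = a * k' := by
    calc a * a' = a * (k' * a * k') := by rw [← hkaka]
      _ = (a * k' * a) * k' := by simp [mul_assoc]
      _ = a * k' := by rw [hak'a]
  -- now the four Green inequalities
  have hRxa' : leR x a' := by
    refine Or.inr ⟨a * x, ?_⟩
    calc x = x * k * x := hxkx.symm
      _ = a' * a * x := by rw [ha'a]
      _ = a' * (a * x) := mul_assoc a' a x
  have hRa'x : leR a' x := by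
    refine Or.inr ⟨k * a', ?_⟩
    calc a' = a' * a * a' := hinv.2.symm
      _ = x * k * a' := by rw [ha'a]
      _ = x * (k * a') := mul_assoc x k a'
  have hLxa' : leL x a' := by
    refine Or.inr ⟨x * a, ?_⟩
    calc x = x * a * k' := hk'
      _ = x * (a * k') := mul_assoc x a k'
      _ = x * (a * a') := by rw [haa']
      _ = x * a * a' := (mul_assoc x a a').symm
  have hLa'x : leL a' x := by
    refine Or.inr ⟨a' * m', ?_⟩
    calc a' = a' * a * a' := hinv.2.symm
      _ = a' * (a * a') := mul_assoc a' a a'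
      _ = a' * (a * k') := by rw [haa']
      _ = a' * (m' * x) := by rw [ham'x]
      _ = a' * m' * x := (mul_assoc a' m' x).symm
  exact ⟨⟨hLxa', hRxa'⟩, ⟨hLa'x, hRa'x⟩⟩

theorem stmt7 (a : S) (ha : ∃ x : S, a = a * x * a) :
    (∀ a' a'' : S, refInv a a' → refInv a a'' → a' = a'') ↔
    (∀ a' a'' : S, VH a a' → VH a a'' → grH a' a'') := by
  obtain ⟨w, hw⟩ := ha
  constructor
  · intro h1 x' x'' hx' hx''
    -- w*a*w is a reflexive inverse of a
    have hinv : refInv a (w * a * w) := by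
      constructor
      · calc a * (w * a * w) * a = a * w * a * (w * a) := by simp [mul_assoc]
          _ = a * (w * a) := by rw [← hw]
          _ = a * w * a := (mul_assoc a w a).symm
          _ = a := hw.symm
      · calc w * a * w * a * (w * a * w) = w * (a * w * a) * (w * a * w) := by
              simp [mul_assoc]
          _ = w * a * (w * a * w) := by rw [← hw]
          _ = w * (a * w * a) * w := by simp [mul_assoc]
          _ = w * a * w := by rw [← hw]
    have huniq : ∀ y : S, refInv a y → y = w * a * w := fun y hy => h1 y _ hy hinv
    exact grH_trans' (key hinv huniq hx') (grH_symm' (key hinv huniq hx''))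
  · intro h2 a1 a2 hi1 hi2
    have hv1 : VH a a1 := ⟨by rw [hi1.1]; exact grH_refl' a, by rw [hi1.2]; exact grH_refl' a1⟩
    have hv2 : VH a a2 := ⟨by rw [hi2.1]; exact grH_refl' a, by rw [hi2.2]; exact grH_refl' a2⟩
    have h12 : grH a1 a2 := h2 a1 a2 hv1 hv2
    -- a1 * a = a2 * a
    have haa : a1 * a = a2 * a := by
      rcases h12.1.2 with heq | ⟨c, hc⟩
      · rw [heq]
      · have hA : a2 * a * (a1 * a) = a1 * a := by
          rw [hc]
          calc a2 * a * (a2 * c * a) = a2 * a * a2 * (c * a) := by simp [mul_assoc]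
            _ = a2 * (c * a) := by rw [hi2.2]
            _ = a2 * c * a := (mul_assoc a2 c a).symm
        have hB : a2 * a * (a1 * a) = a2 * a := by
          calc a2 * a * (a1 * a) = a2 * (a * a1 * a) := by simp [mul_assoc]
            _ = a2 * a := by rw [hi1.1]
        exact hA.symm.trans hB
    -- a * a1 = a * a2
    have haa' : a * a1 = a * a2 := by
      rcases h12.1.1 with heq | ⟨d, hd⟩
      · rw [heq]
      · have hA : a * a1 * (a * a2) = a * a2 := by
          calc a * a1 * (a * a2) = (a * a1 * a) * a2 := by simp [mul_assoc]
            _ = a * a2 := by rw [hi1.1]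
        have hB : a * a1 * (a * a2) = a * a1 := by
          rw [hd]
          calc a * (d * a2) * (a * a2) = a * d * (a2 * a * a2) := by simp [mul_assoc]
            _ = a * d * a2 := by rw [hi2.2]
            _ = a * (d * a2) := mul_assoc a d a2
        exact hB.symm.trans hA
    calc a1 = a1 * a * a1 := hi1.2.symm
      _ = a1 * (a * a1) := mul_assoc a1 a a1
      _ = a1 * (a * a2) := by rw [haa']
      _ = a1 * a * a2 := (mul_assoc a1 a a2).symm
      _ = a2 * a * a2 := by rw [haa]
      _ = a2 := hi2.2
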